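/- In the matching produced by doctor-proposing deferred acceptance, every doctor is matched to their favorite stable partner: if μ₀ = DPDA(P) and μ is any stable matching for P, then for every doctor d, μ₀(d) ⪰_d μ(d). -/

import Mathlib

/-- A two-sided matching market: each doctor has an ordered preference list of
acceptable hospitals, and vice versa (earlier in the list = more preferred). -/
structure Market (D H : Type*) where
  dpref : D → List H
  hpref : H → List D

variable {D H : Type*}

/-- Doctor `d` strictly prefers hospital `h` to the (optional) assignment `o`. -/
def dPrefers [DecidableEq H] (M : Market D H) (d : D) (h : H) : Option H → Prop
  | none => h ∈ M.dpref d
  | some h' => h ∈ M.dpref d ∧ (M.dpref d).idxOf h < (M.dpref d).idxOf h'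

/-- Hospital `h` strictly prefers doctor `d` to the (optional) assignment `o`. -/
def hPrefers [DecidableEq D] (M : Market D H) (h : H) (d : D) : Option D → Prop
  | none => d ∈ M.hpref h
  | some d' => d ∈ M.hpref h ∧ (M.hpref h).idxOf d < (M.hpref h).idxOf d'

/-- `μD, μH` describe a matching: assignments on the two sides are consistent. -/
def IsMatching (μD : D → Option H) (μH : H → Option D) : Prop :=
  ∀ d h, μD d = some h ↔ μH h = some d

/-- The pair `(d, h)` blocks the matching `(μD, μH)`. -/
def Blocks [DecidableEq D] [DecidableEq H] (M : Market D H) (μD : D → Option H) (μH : H → Option D) (d : D) (h : H) : Prop :=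
  dPrefers M d h (μD d) ∧ hPrefers M h d (μH h)

/-- Every matched pair is mutually acceptable (individual rationality). -/
def IndRational (M : Market D H) (μD : D → Option H) : Prop :=
  ∀ d h, μD d = some h → h ∈ M.dpref d ∧ d ∈ M.hpref h

/-- A stable matching: a consistent, individually rational matching
with no blocking pair. -/
def IsStable [DecidableEq D] [DecidableEq H] (M : Market D H) (μD : D → Option H) (μH : H → Option D) : Prop :=
  IsMatching μD μH ∧ IndRational M μD ∧ ∀ d h, ¬ Blocks M μD μH d h

/-- State of the deferred-acceptance algorithm: the current tentative assignment
of doctors, and the list of hospitals each doctor has not yet proposed to. -/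
structure MState (D H : Type*) where
  asgn : D → Option H
  rem : D → List H

/-- The doctor currently (tentatively) matched to hospital `h`, if any. -/
noncomputable def curMatch [Fintype D] [DecidableEq D] [DecidableEq H]
    (asgn : D → Option H) (h : H) : Option D :=
  (Finset.univ.filter (fun d => asgn d = some h)).toList.head?

/-- Does hospital `h` accept a proposal from doctor `d`, given its current match? -/
def accepts [DecidableEq D] (M : Market D H) (h : H) (d : D) : Option D → Bool
  | none => (M.hpref h).contains d
  | some d' => (M.hpref h).contains d &&
      decide ((M.hpref h).idxOf d < (M.hpref h).idxOf d')

/-- One step of doctor-proposing deferred acceptance: some unmatched doctor with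
a nonempty remaining list proposes to their favorite not-yet-proposed-to
hospital, which accepts iff it prefers the proposer to its current match. -/
noncomputable def stepF [Fintype D] [DecidableEq D] [DecidableEq H] (M : Market D H)
    (s : MState D H) : MState D H :=
  match (Finset.univ.filter (fun d => s.asgn d = none ∧ s.rem d ≠ [])).toList.head? with
  | none => s
  | some d =>
    match s.rem d with
    | [] => s
    | h :: rest =>
      if accepts M h d (curMatch s.asgn h) then
        { asgn := fun d' => if d' = d then some h
            else if s.asgn d' = some h then none else s.asgn d',
          rem := fun d' => if d' = d then rest else s.rem d' }
      else
        { asgn := s.asgn, rem := fun d' => if d' = d then rest else s.rem d' }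

/-- The initial state: everyone unmatched, no proposals made. -/
def initState (M : Market D H) : MState D H := ⟨fun _ => none, M.dpref⟩

/-- An upper bound on the number of steps the algorithm can take. -/
def dpdaFuel [Fintype D] (M : Market D H) : ℕ := (∑ d, (M.dpref d).length) + 1

/-- The final state of doctor-proposing deferred acceptance. -/
noncomputable def dpdaState [Fintype D] [DecidableEq D] [DecidableEq H] (M : Market D H) : MState D H :=
  (stepF M)^[dpdaFuel M] (initState M)

/-- The doctor-side matching produced by doctor-proposing deferred acceptance. -/
noncomputable def dpda [Fintype D] [DecidableEq D] [DecidableEq H] (M : Market D H) : D → Option H :=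
  (dpdaState M).asgn

/-- The hospital-side matching produced by doctor-proposing deferred acceptance. -/
noncomputable def dpdaH [Fintype D] [DecidableEq D] [DecidableEq H] (M : Market D H) : H → Option D :=
  curMatch (dpdaState M).asgn

/-- Doctor `d` weakly prefers the (optional) assignment `o₁` to `o₂`. -/
def dWeakPrefers [DecidableEq H] (M : Market D H) (d : D) (o₁ o₂ : Option H) : Prop :=
  o₁ = o₂ ∨ ∃ h, o₁ = some h ∧ dPrefers M d h o₂

section DPDAProof

variable {D H : Type*} [Fintype D] [DecidableEq D] [DecidableEq H]

lemma indexOf_append_cons_le {α : Type*} [DecidableEq α] (pre rest : List α) (a : α) :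
    (pre ++ a :: rest).idxOf a ≤ pre.length := by
  induction pre with
  | nil => simp [List.idxOf_cons]
  | cons b pre ih =>
    simp only [List.cons_append, List.idxOf_cons, List.length_cons]
    cases hba : b == a
    · simpa [hba] using Nat.succ_le_succ ih
    · simp [hba]

lemma getElem_append_cons {α : Type*} (pre rest : List α) (a : α) :
    (pre ++ a :: rest)[pre.length]'(by simp) = a := by
  rw [List.getElem_append_right (le_refl _)]; simp

lemma curMatch_eq_some (asgn : D → Option H)
    (uniq : ∀ d₁ d₂ h, asgn d₁ = some h → asgn d₂ = some h → d₁ = d₂)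
    {h : H} {d : D} (hd : asgn d = some h) : curMatch asgn h = some d := by
  have hfil : Finset.univ.filter (fun d' => asgn d' = some h) = {d} := by
    ext d'
    simp only [Finset.mem_filter, Finset.mem_univ, true_and, Finset.mem_singleton]
    constructor
    · intro hd'; exact uniq d' d h hd' hd
    · rintro rfl; exact hd
  rw [curMatch, hfil, Finset.toList_singleton]; rfl

lemma curMatch_mem {asgn : D → Option H} {h : H} {d : D}
    (hc : curMatch asgn h = some d) : asgn d = some h := by
  have hmem : d ∈ (Finset.univ.filter (fun d' => asgn d' = some h)).toList :=
    List.mem_of_mem_head? (Option.mem_def.mpr hc)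
  simpa using Finset.mem_toList.1 hmem

lemma curMatch_none {asgn : D → Option H} {h : H}
    (hc : curMatch asgn h = none) (d : D) : asgn d ≠ some h := by
  intro hd
  have hfil : Finset.univ.filter (fun d' => asgn d' = some h) = ∅ := by
    rw [← Finset.toList_eq_nil, ← List.head?_eq_none_iff]; exact hc
  have : d ∈ Finset.univ.filter (fun d' => asgn d' = some h) := by simp [hd]
  rw [hfil] at this; simp at this

/-- The invariant maintained by deferred acceptance, relative to a stable matching `μD`. -/
structure DAInv (M : Market D H) (μD : D → Option H) (s : MState D H) : Prop where
  suff : ∀ d : D, ∃ pre, M.dpref d = pre ++ s.rem d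
  asgn_pre : ∀ (d : D) (h' : H), s.asgn d = some h' → ∃ pre, M.dpref d = pre ++ h' :: s.rem d
  uniq : ∀ (d₁ d₂ : D) (h : H), s.asgn d₁ = some h → s.asgn d₂ = some h → d₁ = d₂
  acc : ∀ (d : D) (h : H), s.asgn d = some h → d ∈ M.hpref h
  stab : ∀ (d : D) (h : H), μD d = some h →
    (M.dpref d).length - (s.rem d).length ≤ (M.dpref d).idxOf h ∨ s.asgn d = some h

lemma DAInv.init (M : Market D H) (μD : D → Option H) : DAInv M μD (initState M) := by
  refine ⟨fun d => ⟨[], rfl⟩, ?_, ?_, ?_, ?_⟩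
  · intro d h' h; simp [initState] at h
  · intro d₁ d₂ h h1; simp [initState] at h1
  · intro d h h1; simp [initState] at h1
  · intro d h _; left; simp [initState]

/-- Key blocking-pair argument: if `d₁` has reached hospital `h` on its list
(i.e. the first occurrence of `h` is at or before the current pointer) and
`h` is not `d₁`'s stable partner, then `d₁` strictly prefers `h` to `μD d₁`. -/
lemma dPrefers_of_inv {M : Market D H} {μD : D → Option H} {μH : H → Option D}
    (hst : IsStable M μD μH) {s : MState D H} (inv : DAInv M μD s)
    {d₁ : D} {h : H} (hmem : h ∈ M.dpref d₁)
    (hidx : (M.dpref d₁).idxOf h ≤ (M.dpref d₁).length - (s.rem d₁).length)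
    (hA : s.asgn d₁ = some h ∨ s.asgn d₁ = none)
    (hne : μD d₁ ≠ some h) :
    dPrefers M d₁ h (μD d₁) := by
  cases hm : μD d₁ with
  | none => simpa [dPrefers] using hmem
  | some h₂ =>
    have h₂mem : h₂ ∈ M.dpref d₁ := (hst.2.1 d₁ h₂ hm).1
    have hne2 : h ≠ h₂ := fun he => hne (he ▸ hm)
    have hn : (M.dpref d₁).length - (s.rem d₁).length ≤ (M.dpref d₁).idxOf h₂ := by
      rcases inv.stab d₁ h₂ hm with h1 | h1
      · exact h1
      · rcases hA with h2 | h2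
        · rw [h1] at h2
          exact absurd (Option.some_injective _ h2).symm hne2
        · rw [h2] at h1; cases h1
    have hlt : (M.dpref d₁).idxOf h < (M.dpref d₁).idxOf h₂ := by
      rcases lt_or_eq_of_le (le_trans hidx hn) with h3 | h3
      · exact h3
      · exact absurd ((List.idxOf_inj hmem).1 h3) hne2
    exact ⟨hmem, hlt⟩

lemma stepF_none (M : Market D H) (s : MState D H)
    (hhd : (Finset.univ.filter (fun d => s.asgn d = none ∧ s.rem d ≠ [])).toList.head? = none) :
    stepF M s = s := by
  rw [stepF, hhd]

lemma stepF_some (M : Market D H) (s : MState D H) {d₀ : D} {h₀ : H} {rest : List H}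
    (hhd : (Finset.univ.filter (fun d => s.asgn d = none ∧ s.rem d ≠ [])).toList.head? = some d₀)
    (hrem : s.rem d₀ = h₀ :: rest) :
    stepF M s =
      if accepts M h₀ d₀ (curMatch s.asgn h₀) then
        { asgn := fun d' => if d' = d₀ then some h₀
            else if s.asgn d' = some h₀ then none else s.asgn d',
          rem := fun d' => if d' = d₀ then rest else s.rem d' }
      else
        { asgn := s.asgn, rem := fun d' => if d' = d₀ then rest else s.rem d' } := by
  rw [stepF, hhd]
  split
  · rename_i heq; cases heq
  · rename_i r heq
    injection heq with e; subst e
    split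
    · rename_i heq2; rw [hrem] at heq2; cases heq2
    · rename_i h' r' heq2
      rw [hrem] at heq2
      injection heq2 with e1 e2
      subst e1; subst e2; rfl

lemma head?_spec (s : MState D H) {d₀ : D}
    (hhd : (Finset.univ.filter (fun d => s.asgn d = none ∧ s.rem d ≠ [])).toList.head? = some d₀) :
    s.asgn d₀ = none ∧ s.rem d₀ ≠ [] := by
  have hmem := List.mem_of_mem_head? (Option.mem_def.mpr hhd)
  simpa using Finset.mem_toList.1 hmem

end DPDAProof

section DPDAProof2

variable {D H : Type*} [Fintype D] [DecidableEq D] [DecidableEq H]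

lemma indexOf_append_cons_ne {α : Type*} [DecidableEq α] (pre rest : List α) {a b : α}
    (hne : b ≠ a) : (pre ++ a :: rest).idxOf b ≠ pre.length := by
  induction pre with
  | nil =>
    cases h : a == b
    · simp [List.idxOf_cons, h]
    · exact absurd (eq_of_beq h).symm hne
  | cons c pre ih =>
    simp only [List.cons_append, List.idxOf_cons, List.length_cons]
    cases h : c == b
    · simpa using fun e => ih e
    · simp

lemma accepts_mem {M : Market D H} {h : H} {d : D} {o : Option D}
    (hacc : accepts M h d o = true) : d ∈ M.hpref h := by
  cases o <;> simp [accepts] at hacc <;> tauto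

lemma DAInv.step {M : Market D H} {μD : D → Option H} {μH : H → Option D}
    (hst : IsStable M μD μH) {s : MState D H} (inv : DAInv M μD s) :
    DAInv M μD (stepF M s) := by
  cases hhd : (Finset.univ.filter (fun d => s.asgn d = none ∧ s.rem d ≠ [])).toList.head? with
  | none => rw [stepF_none M s hhd]; exact inv
  | some d₀ =>
    obtain ⟨ha₀, hr₀⟩ := head?_spec s hhd
    cases hrem : s.rem d₀ with
    | nil => exact absurd hrem hr₀
    | cons h₀ rest =>
      rw [stepF_some M s hhd hrem]
      obtain ⟨pre₀, hpre₀⟩ := inv.suff d₀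
      rw [hrem] at hpre₀
      have hmem₀ : h₀ ∈ M.dpref d₀ := by rw [hpre₀]; simp
      have hidx₀ : (M.dpref d₀).idxOf h₀ ≤ pre₀.length := by
        rw [hpre₀]; exact indexOf_append_cons_le _ _ _
      have hlen₀ : (M.dpref d₀).length = pre₀.length + rest.length + 1 := by
        rw [hpre₀]; simp only [List.length_append, List.length_cons]; omega
      have hadv : ∀ h : H, μD d₀ = some h → h ≠ h₀ →
          (M.dpref d₀).length - rest.length ≤ (M.dpref d₀).idxOf h := by
        intro h hμ hne
        rcases inv.stab d₀ h hμ with h1 | h1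
        · rw [hrem] at h1
          have hne2 : (M.dpref d₀).idxOf h ≠ pre₀.length := by
            rw [hpre₀]; exact indexOf_append_cons_ne _ _ hne
          simp only [List.length_cons] at h1
          omega
        · rw [ha₀] at h1; cases h1
      have hidxle : (M.dpref d₀).idxOf h₀ ≤ (M.dpref d₀).length - (s.rem d₀).length := by
        rw [hrem]; simp only [List.length_cons]; omega
      by_cases hacc : accepts M h₀ d₀ (curMatch s.asgn h₀) = true
      · rw [if_pos hacc]
        refine ⟨?_, ?_, ?_, ?_, ?_⟩
        · intro d
          by_cases hd : d = d₀
          · subst hd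
            exact ⟨pre₀ ++ [h₀], by rw [hpre₀]; simp⟩
          · simpa [hd] using inv.suff d
        · intro d h' hA
          simp only at hA ⊢
          by_cases hd : d = d₀
          · subst hd
            rw [if_pos rfl] at hA
            injection hA with e; subst e
            exact ⟨pre₀, by rw [hpre₀]; simp⟩
          · rw [if_neg hd] at hA
            rw [if_neg hd]
            split at hA
            · cases hA
            · exact inv.asgn_pre d h' hA
        · intro d₁ d₂ h hA1 hA2
          simp only at hA1 hA2
          by_cases h1 : d₁ = d₀ <;> by_cases h2 : d₂ = d₀
          · rw [h1, h2]
          · subst h1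
            rw [if_pos rfl] at hA1
            rw [if_neg h2] at hA2
            injection hA1 with e; subst e
            split at hA2
            · cases hA2
            · rename_i hcond; exact absurd hA2 hcond
          · subst h2
            rw [if_pos rfl] at hA2
            rw [if_neg h1] at hA1
            injection hA2 with e; subst e
            split at hA1
            · cases hA1
            · rename_i hcond; exact absurd hA1 hcond
          · rw [if_neg h1] at hA1
            rw [if_neg h2] at hA2
            split at hA1
            · cases hA1
            · split at hA2
              · cases hA2
              · exact inv.uniq d₁ d₂ h hA1 hA2
        · intro d h hA
          simp only at hA
          by_cases hd : d = d₀
          · subst hd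
            rw [if_pos rfl] at hA
            injection hA with e; subst e
            exact accepts_mem hacc
          · rw [if_neg hd] at hA
            split at hA
            · cases hA
            · exact inv.acc d h hA
        · intro d h hμ
          simp only
          by_cases hd : d = d₀
          · subst hd
            by_cases hh : h = h₀
            · right; rw [if_pos rfl, hh]
            · left
              rw [if_pos rfl]
              exact hadv h hμ hh
          · rcases inv.stab d h hμ with h1 | h1
            · left; rw [if_neg hd]; exact h1
            · by_cases hh : h = h₀
              · -- displacement of a stable partner: blocking pair (d₀, h₀)
                exfalso
                rw [hh] at hμ h1
                have hcm : curMatch s.asgn h₀ = some d := curMatch_eq_some s.asgn inv.uniq h1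
                rw [hcm] at hacc
                simp only [accepts, Bool.and_eq_true, decide_eq_true_eq, List.elem_eq_mem] at hacc
                have hμH : μH h₀ = some d := (hst.1 d h₀).1 hμ
                have hneμ : μD d₀ ≠ some h₀ := by
                  intro he
                  have := (hst.1 d₀ h₀).1 he
                  rw [hμH] at this
                  injection this with e; exact hd e
                have hdP : dPrefers M d₀ h₀ (μD d₀) :=
                  dPrefers_of_inv hst inv hmem₀ hidxle (Or.inr ha₀) hneμ
                have hhP : hPrefers M h₀ d₀ (μH h₀) := by
                  rw [hμH]
                  exact ⟨by simpa using hacc.1, hacc.2⟩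
                exact hst.2.2 d₀ h₀ ⟨hdP, hhP⟩
              · right
                rw [if_neg hd, if_neg (by rw [h1]; simp [hh])]
                exact h1
      · rw [if_neg hacc]
        refine ⟨?_, ?_, ?_, ?_, ?_⟩
        · intro d
          by_cases hd : d = d₀
          · subst hd
            exact ⟨pre₀ ++ [h₀], by rw [hpre₀]; simp⟩
          · simpa [hd] using inv.suff d
        · intro d h' hA
          simp only at hA ⊢
          by_cases hd : d = d₀
          · subst hd; rw [ha₀] at hA; cases hA
          · rw [if_neg hd]; exact inv.asgn_pre d h' hA
        · exact inv.uniq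
        · exact inv.acc
        · intro d h hμ
          simp only
          by_cases hd : d = d₀
          · subst hd
            by_cases hh : h = h₀
            · -- rejection of a stable partner: blocking pair (d₁, h₀)
              exfalso
              rw [hh] at hμ
              have hdmem : d ∈ M.hpref h₀ := (hst.2.1 d h₀ hμ).2
              cases hcm : curMatch s.asgn h₀ with
              | none =>
                rw [hcm] at hacc
                simp only [accepts, List.elem_eq_mem, decide_eq_true_eq] at hacc
                exact hacc (by simpa using hdmem)
              | some d₁ =>
                have hd₁ : s.asgn d₁ = some h₀ := curMatch_mem hcm
                have hd₁mem : d₁ ∈ M.hpref h₀ := inv.acc d₁ h₀ hd₁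
                rw [hcm] at hacc
                simp only [accepts, Bool.and_eq_true, decide_eq_true_eq,
                  List.elem_eq_mem, not_and] at hacc
                have hle : (M.hpref h₀).idxOf d₁ ≤ (M.hpref h₀).idxOf d := by
                  have := hacc (by simpa using hdmem)
                  omega
                have hne01 : d₁ ≠ d := by
                  intro e; rw [e, ha₀] at hd₁; cases hd₁
                have hltidx : (M.hpref h₀).idxOf d₁ < (M.hpref h₀).idxOf d :=
                  lt_of_le_of_ne hle (fun e => hne01 ((List.idxOf_inj hd₁mem).1 e))
                have hμH : μH h₀ = some d := (hst.1 d h₀).1 hμ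
                have hneμ : μD d₁ ≠ some h₀ := by
                  intro he
                  have := (hst.1 d₁ h₀).1 he
                  rw [hμH] at this
                  injection this with e; exact hne01 e.symm
                obtain ⟨pre₁, hpre₁⟩ := inv.asgn_pre d₁ h₀ hd₁
                have hmem₁ : h₀ ∈ M.dpref d₁ := by rw [hpre₁]; simp
                have hidx₁ : (M.dpref d₁).idxOf h₀ ≤
                    (M.dpref d₁).length - (s.rem d₁).length := by
                  have h4 : (M.dpref d₁).idxOf h₀ ≤ pre₁.length := by
                    rw [hpre₁]; exact indexOf_append_cons_le _ _ _
                  have h5 : (M.dpref d₁).length = pre₁.length + (s.rem d₁).length + 1 := by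
                    rw [hpre₁]; simp only [List.length_append, List.length_cons]; omega
                  omega
                have hdP : dPrefers M d₁ h₀ (μD d₁) :=
                  dPrefers_of_inv hst inv hmem₁ hidx₁ (Or.inl hd₁) hneμ
                have hhP : hPrefers M h₀ d₁ (μH h₀) := by
                  rw [hμH]; exact ⟨hd₁mem, hltidx⟩
                exact hst.2.2 d₁ h₀ ⟨hdP, hhP⟩
            · left
              rw [if_pos rfl]
              exact hadv h hμ hh
          · rw [if_neg hd]
            exact inv.stab d h hμ

/-- All proposals exhausted for unmatched doctors. -/
def DAdone (s : MState D H) : Prop := ∀ d : D, s.asgn d = none → s.rem d = []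

lemma stepF_eq_self (M : Market D H) {s : MState D H} (hP : DAdone s) : stepF M s = s := by
  apply stepF_none
  rw [List.head?_eq_none_iff, Finset.toList_eq_nil, Finset.filter_eq_empty_iff]
  intro d _ hc
  exact hc.2 (hP d hc.1)

lemma measure_lt (M : Market D H) {s : MState D H} (hP : ¬ DAdone s) :
    ∑ d, ((stepF M s).rem d).length < ∑ d, (s.rem d).length := by
  cases hhd : (Finset.univ.filter (fun d => s.asgn d = none ∧ s.rem d ≠ [])).toList.head? with
  | none =>
    exfalso
    apply hP
    intro d hd
    by_contra hne
    rw [List.head?_eq_none_iff, Finset.toList_eq_nil, Finset.filter_eq_empty_iff] at hhd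
    exact hhd (Finset.mem_univ d) ⟨hd, hne⟩
  | some d₀ =>
    obtain ⟨ha₀, hr₀⟩ := head?_spec s hhd
    cases hrem : s.rem d₀ with
    | nil => exact absurd hrem hr₀
    | cons h₀ rest =>
      rw [stepF_some M s hhd hrem]
      have key : ∀ f : D → List H, f = (fun d' => if d' = d₀ then rest else s.rem d') →
          ∑ d, (f d).length < ∑ d, (s.rem d).length := by
        rintro f rfl
        apply Finset.sum_lt_sum
        · intro i _
          dsimp only
          by_cases hi : i = d₀
          · subst hi; rw [if_pos rfl, hrem]; simp
          · rw [if_neg hi]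
        · exact ⟨d₀, Finset.mem_univ d₀, by dsimp only; rw [if_pos rfl, hrem]; simp⟩
      split_ifs <;> exact key _ rfl

lemma done_iterate (M : Market D H) :
    ∀ (k : ℕ) (s : MState D H), (∑ d, (s.rem d).length) < k → DAdone ((stepF M)^[k] s) := by
  intro k
  induction k with
  | zero => intro s h; omega
  | succ k ih =>
    intro s hk
    by_cases hP : DAdone s
    · rw [Function.iterate_fixed (stepF_eq_self M hP)]; exact hP
    · rw [Function.iterate_succ_apply]
      exact ih _ (by have := measure_lt M hP; omega)

lemma done_dpdaState (M : Market D H) : DAdone (dpdaState M) := by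
  apply done_iterate
  simp [initState, dpdaFuel]

lemma inv_dpdaState {M : Market D H} {μD : D → Option H} {μH : H → Option D}
    (hst : IsStable M μD μH) : DAInv M μD (dpdaState M) := by
  rw [dpdaState]
  induction dpdaFuel M with
  | zero => exact DAInv.init M μD
  | succ n ih =>
    rw [Function.iterate_succ_apply']
    exact ih.step hst

end DPDAProof2

/-- In the matching produced by doctor-proposing deferred
acceptance, every doctor is matched to their favorite stable partner: if
`μ₀ = DPDA(P)` and `μ` is any stable matching for `P`, then every doctor `d`
weakly prefers `μ₀(d)` to `μ(d)`. -/
theorem dpda_doctorOptimal {D H : Type*} [Fintype D] [DecidableEq D] [DecidableEq H]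
    (M : Market D H) (μD : D → Option H) (μH : H → Option D)
    (hstable : IsStable M μD μH) (d : D) :
    dWeakPrefers M d (dpda M d) (μD d) := by
  have inv := inv_dpdaState hstable
  have hdone := done_dpdaState M
  cases hμ : μD d with
  | none =>
    cases ha : (dpdaState M).asgn d with
    | none => left; rw [dpda, ha]
    | some h' =>
      right
      refine ⟨h', by rw [dpda, ha], ?_⟩
      obtain ⟨pre, hpre⟩ := inv.asgn_pre d h' ha
      show h' ∈ M.dpref d
      rw [hpre]; simp
  | some h =>
    rcases inv.stab d h hμ with h1 | h1
    · cases ha : (dpdaState M).asgn d with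
      | none =>
        exfalso
        have hrem := hdone d ha
        rw [hrem] at h1
        have hmem : h ∈ M.dpref d := (hstable.2.1 d h hμ).1
        have h2 := List.idxOf_lt_length_iff.2 hmem
        simp only [List.length_nil, Nat.sub_zero] at h1
        omega
      | some h' =>
        right
        refine ⟨h', by rw [dpda, ha], ?_⟩
        obtain ⟨pre, hpre⟩ := inv.asgn_pre d h' ha
        refine ⟨by rw [hpre]; simp, ?_⟩
        have h4 : (M.dpref d).idxOf h' ≤ pre.length := by
          rw [hpre]; exact indexOf_append_cons_le _ _ _
        have h5 : (M.dpref d).length = pre.length + ((dpdaState M).rem d).length + 1 := by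
          rw [hpre]; simp only [List.length_append, List.length_cons]; omega
        omega
    · left; rw [dpda, h1]
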